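/- arXiv:1110.1273 — 7 statements merged into one kernel-verified Lean document; each statement's English description precedes it below -/
import Mathlib

section
/- Let d ≥ 1, β ∈ ℝ, and A : [0,∞) × ℝ^d → ℝ. Suppose V, V̄ : [0,∞) × ℝ^d → ℝ are such that t ↦ V(t,0) is continuous and, for all t ≥ 0 and x ∈ ℝ^d, V(t,x) = A(t,x) − ∫₀ᵗ V(s,0) ds and V̄(t,x) = A(t,x) − β·t. Then for all t ≥ 0 and x ∈ ℝ^d: (i) V(t,x) − V(t,0) = V̄(t,x) − V̄(t,0); and (ii) V(t,x) = V̄(t,x) − e^{−t} ∫₀ᵗ e^{s} V̄(s,0) ds + β(1 − e^{−t}). -/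
/-!
Both `V` and `V̄` differ from `A` by a function of `t` alone, which gives (i) and
`V̄(t,0) = V(t,0) + F(t) - βt` with `F(t) = ∫₀ᵗ V(s,0) ds`. Since `F' = V(·,0)`, the function
`G(t) = F(t) - βt` satisfies `V̄(t,0) = G' + G + β`, so `e^t` is an integrating factor:
`∫₀ᵗ eˢ V̄(s,0) ds = eᵗ G(t) + β(eᵗ - 1)`, and (ii) follows by solving for `F(t) = A(t,x) - V(t,x)`.
-/

open intervalIntegral Set Real

section Primitive

variable {v : ℝ → ℝ} {a : ℝ}

theorem continuousOn_primitive_Icc_of_continuousOn_Ici (hv : ContinuousOn v (Ici a))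
    {t : ℝ} (hat : a ≤ t) : ContinuousOn (fun s => ∫ u in a..s, v u) (Icc a t) := by
  have hint : IntervalIntegrable v MeasureTheory.volume a t :=
    (hv.mono Icc_subset_Ici_self).intervalIntegrable_of_Icc hat
  simpa only [uIcc_of_le hat] using
    continuousOn_primitive_interval' hint (left_mem_uIcc : a ∈ uIcc a t)

theorem hasDerivAt_primitive_of_continuousOn_Ici (hv : ContinuousOn v (Ici a))
    {s : ℝ} (hs : a < s) : HasDerivAt (fun t => ∫ u in a..t, v u) (v s) s :=
  integral_hasDerivAt_right
    ((hv.mono Icc_subset_Ici_self).intervalIntegrable_of_Icc hs.le)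
    ((hv.mono Ioi_subset_Ici_self).stronglyMeasurableAtFilter isOpen_Ioi s hs)
    (hv.continuousAt (Ici_mem_nhds hs))

end Primitive

theorem integral_exp_mul_add_eq_of_hasDerivAt {g G : ℝ → ℝ} {a b : ℝ} (hab : a ≤ b)
    (hG : ContinuousOn G (Icc a b)) (hg : ContinuousOn g (Icc a b))
    (hderiv : ∀ s ∈ Ioo a b, HasDerivAt G (g s) s) :
    ∫ s in a..b, exp s * (g s + G s) = exp b * G b - exp a * G a := by
  refine integral_eq_sub_of_hasDerivAt_of_le hab (continuous_exp.continuousOn.mul hG)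
    (fun s hs => ?_) ((continuous_exp.continuousOn.mul (hg.add hG)).intervalIntegrable_of_Icc hab)
  exact ((hasDerivAt_exp s).mul (hderiv s hs)).congr_deriv (by ring)

theorem stmt_3_general (d : ℕ) (β : ℝ)
    (A V Vbar : ℝ → (Fin d → ℝ) → ℝ)
    (hVcont : ContinuousOn (fun t => V t 0) (Set.Ici 0))
    (hV : ∀ t ≥ (0 : ℝ), ∀ x : Fin d → ℝ, V t x = A t x - ∫ s in (0 : ℝ)..t, V s 0)
    (hVbar : ∀ t ≥ (0 : ℝ), ∀ x : Fin d → ℝ, Vbar t x = A t x - β * t) :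
    ∀ t ≥ (0 : ℝ), ∀ x : Fin d → ℝ,
      V t x - V t 0 = Vbar t x - Vbar t 0 ∧
      V t x = Vbar t x - Real.exp (-t) * (∫ s in (0 : ℝ)..t, Real.exp s * Vbar s 0)
        + β * (1 - Real.exp (-t)) := by
  intro t ht x
  refine ⟨by rw [hV t ht x, hV t ht 0, hVbar t ht x, hVbar t ht 0]; ring, ?_⟩
  set F : ℝ → ℝ := fun t => ∫ s in (0 : ℝ)..t, V s 0
  have hexp_mul_Vbar : ∀ s ∈ uIcc 0 t,
      exp s * Vbar s 0 = exp s * ((V s 0 - β) + (F s - β * s)) + β * exp s := by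
    intro s hs
    rw [uIcc_of_le ht] at hs
    have hA : A s 0 = V s 0 + F s := by rw [hV s hs.1 0]; ring
    rw [hVbar s hs.1 0, hA]
    ring
  have hg : ContinuousOn (fun s => V s 0 - β) (Icc 0 t) :=
    (hVcont.mono Icc_subset_Ici_self).sub continuousOn_const
  have hG : ContinuousOn (fun s => F s - β * s) (Icc 0 t) :=
    (continuousOn_primitive_Icc_of_continuousOn_Ici hVcont ht).sub (by fun_prop)
  have hintegrating_factor :
      ∫ s in (0 : ℝ)..t, exp s * ((V s 0 - β) + (F s - β * s)) = exp t * (F t - β * t) := by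
    rw [integral_exp_mul_add_eq_of_hasDerivAt ht hG hg fun s hs =>
      (hasDerivAt_primitive_of_continuousOn_Ici hVcont hs.1).sub
        ((hasDerivAt_id s).const_mul β |>.congr_deriv (mul_one β))]
    simp [F]
  have hintegral :
      ∫ s in (0 : ℝ)..t, exp s * Vbar s 0 = exp t * (F t - β * t) + β * (exp t - 1) := by
    rw [integral_congr hexp_mul_Vbar, integral_add, hintegrating_factor, integral_const_mul,
      integral_exp, exp_zero]
    · exact (continuous_exp.continuousOn.mul (hg.add hG)).intervalIntegrable_of_Icc ht
    · exact (continuous_const.mul continuous_exp).intervalIntegrable _ _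
  rw [hintegral, hV t ht x, hVbar t ht x, exp_neg]
  field_simp
  ring

/-- Lemma 4.4 (L-VV) in abstract form: if `V(t,x) = A(t,x) − ∫₀ᵗ V(s,0) ds` and
`V̄(t,x) = A(t,x) − β·t`, with `t ↦ V(t,0)` continuous on `[0,∞)`, then
`V(t,x) − V(t,0) = V̄(t,x) − V̄(t,0)` and
`V(t,x) = V̄(t,x) − e^{−t} ∫₀ᵗ e^{s} V̄(s,0) ds + β(1 − e^{−t})`. -/
theorem stmt_3 (d : ℕ) (hd : 1 ≤ d) (β : ℝ)
    (A V Vbar : ℝ → (Fin d → ℝ) → ℝ)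
    (hVcont : ContinuousOn (fun t => V t 0) (Set.Ici 0))
    (hV : ∀ t ≥ (0 : ℝ), ∀ x : Fin d → ℝ, V t x = A t x - ∫ s in (0 : ℝ)..t, V s 0)
    (hVbar : ∀ t ≥ (0 : ℝ), ∀ x : Fin d → ℝ, Vbar t x = A t x - β * t) :
    ∀ t ≥ (0 : ℝ), ∀ x : Fin d → ℝ,
      V t x - V t 0 = Vbar t x - Vbar t 0 ∧
      V t x = Vbar t x - Real.exp (-t) * (∫ s in (0 : ℝ)..t, Real.exp s * Vbar s 0)
        + β * (1 - Real.exp (-t)) :=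
  stmt_3_general d β A V Vbar hVcont hV hVbar
end

section
/- Let d ≥ 1, β, c ∈ ℝ, V* : ℝ^d → ℝ with V*(0) = 0, and V, V̄ : [0,∞) × ℝ^d → ℝ with t ↦ V̄(t,0) continuous. Assume V(t,x) = V̄(t,x) − e^{−t} ∫₀ᵗ e^{s} V̄(s,0) ds + β(1 − e^{−t}) for all t ≥ 0 and x ∈ ℝ^d, and that for every x ∈ ℝ^d, V̄(t,x) → V*(x) + c as t → ∞. Then for every x ∈ ℝ^d, V(t,x) → V*(x) + β as t → ∞. -/
/-!
Writing `V̄(t,0) = c + o(1)`, the term `e^{-t} ∫₀ᵗ e^s V̄(s,0) ds` is an exponentially weighted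
average of `V̄(·,0)` and so tends to `c`, which cancels the limit `c` of `V̄(t,x)`; the term
`β(1 - e^{-t})` supplies `β`.
-/

open Filter Asymptotics intervalIntegral Set Real Topology

variable {g : ℝ → ℝ}

lemma intervalIntegrable_exp_mul (hg : ContinuousOn g (Ici 0)) {a b : ℝ} (ha : 0 ≤ a)
    (hb : 0 ≤ b) : IntervalIntegrable (fun s => exp s * g s) MeasureTheory.volume a b :=
  ((continuous_exp.continuousOn.mul hg).mono
    (ordConnected_Ici.uIcc_subset ha hb)).intervalIntegrable

/-- Past a time `T` with `|g| ≤ ε / 2` the integral grows by at most `ε / 2 · eᵗ`; the integral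
up to `T` is a constant, eventually below `ε / 2 · eᵗ` as well. -/
lemma integral_exp_mul_isLittleO_exp (hg : ContinuousOn g (Ici 0))
    (hg0 : Tendsto g atTop (𝓝 0)) :
    (fun t => ∫ s in (0 : ℝ)..t, exp s * g s) =o[atTop] exp := by
  refine isLittleO_iff.mpr fun ε hε => ?_
  obtain ⟨T, hT⟩ := eventually_atTop.mp
    ((hg0.eventually (Metric.closedBall_mem_nhds 0 (half_pos hε))).and (eventually_ge_atTop 0))
  have hT0 : 0 ≤ T := (hT T le_rfl).2
  have hhead : ∀ᶠ t in atTop, ‖∫ s in (0 : ℝ)..T, exp s * g s‖ ≤ ε / 2 * exp t :=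
    (tendsto_exp_atTop.const_mul_atTop (half_pos hε)).eventually_ge_atTop _
  filter_upwards [hhead, eventually_ge_atTop T] with t hhead htT
  have htail : ‖∫ s in T..t, exp s * g s‖ ≤ ε / 2 * exp t :=
    calc ‖∫ s in T..t, exp s * g s‖
        ≤ ∫ s in T..t, exp s * (ε / 2) := by
          refine norm_integral_le_of_norm_le htT (MeasureTheory.ae_of_all _ fun s hs => ?_)
            ((by fun_prop : Continuous fun s => exp s * (ε / 2)).intervalIntegrable T t)
          rw [norm_mul, Real.norm_of_nonneg (exp_pos s).le]
          gcongr
          simpa using (hT s hs.1.le).1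
      _ = ε / 2 * (exp t - exp T) := by rw [integral_mul_const, integral_exp]; ring
      _ ≤ ε / 2 * exp t := by gcongr; linarith [exp_pos T]
  rw [← integral_add_adjacent_intervals (intervalIntegrable_exp_mul hg le_rfl hT0)
    (intervalIntegrable_exp_mul hg hT0 (hT0.trans htT)),
    Real.norm_of_nonneg (exp_pos t).le]
  linarith [norm_add_le (∫ s in (0 : ℝ)..T, exp s * g s) (∫ s in T..t, exp s * g s)]

lemma tendsto_exp_neg_mul_integral_exp_mul (hg : ContinuousOn g (Ici 0)) {L : ℝ}
    (hL : Tendsto g atTop (𝓝 L)) :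
    Tendsto (fun t => exp (-t) * ∫ s in (0 : ℝ)..t, exp s * g s) atTop (𝓝 L) := by
  have hsmall := (integral_exp_mul_isLittleO_exp (g := fun s => g s - L)
    (hg.sub continuousOn_const) (by simpa using hL.sub_const L)).tendsto_div_nhds_zero
  have hlim := hsmall.add ((tendsto_exp_neg_atTop_nhds_zero.const_sub 1).const_mul L)
  rw [zero_add, sub_zero, mul_one] at hlim
  refine hlim.congr' ((eventually_ge_atTop 0).mono fun t ht => ?_)
  have hsplit : ∫ s in (0 : ℝ)..t, exp s * (g s - L)
      = (∫ s in (0 : ℝ)..t, exp s * g s) - L * (exp t - 1) := by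
    simp_rw [mul_sub]
    rw [integral_sub (intervalIntegrable_exp_mul hg le_rfl ht)
      ((by fun_prop : Continuous fun s => exp s * L).intervalIntegrable _ _), integral_mul_const,
      integral_exp, exp_zero]
    ring
  simp only [hsplit, exp_neg]
  field_simp
  ring

theorem stmt_4_general (d : ℕ) (β c : ℝ)
    (Vstar : (Fin d → ℝ) → ℝ) (hVstar0 : Vstar 0 = 0)
    (V Vbar : ℝ → (Fin d → ℝ) → ℝ)
    (hcont : ContinuousOn (fun t => Vbar t 0) (Set.Ici 0))
    (hrel : ∀ t ≥ (0 : ℝ), ∀ x : Fin d → ℝ,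
      V t x = Vbar t x - Real.exp (-t) * (∫ s in (0 : ℝ)..t, Real.exp s * Vbar s 0)
        + β * (1 - Real.exp (-t)))
    (hconv : ∀ x : Fin d → ℝ, Tendsto (fun t => Vbar t x) atTop (nhds (Vstar x + c))) :
    ∀ x : Fin d → ℝ, Tendsto (fun t => V t x) atTop (nhds (Vstar x + β)) := by
  intro x
  have hmean := tendsto_exp_neg_mul_integral_exp_mul hcont
    (by simpa only [hVstar0, zero_add] using hconv 0)
  have hlim := ((hconv x).sub hmean).add
    ((tendsto_exp_neg_atTop_nhds_zero.const_sub 1).const_mul β)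
  rw [add_sub_cancel_right, sub_zero, mul_one] at hlim
  exact hlim.congr' ((eventually_ge_atTop 0).mono fun t ht => (hrel t ht x).symm)

/-- Deduction of the main theorem: if
`V(t,x) = V̄(t,x) − e^{−t} ∫₀ᵗ e^{s} V̄(s,0) ds + β(1 − e^{−t})`, `t ↦ V̄(t,0)` is
continuous, `V*(0) = 0` and `V̄(t,x) → V*(x) + c` as `t → ∞` for every `x`, then
`V(t,x) → V*(x) + β` as `t → ∞` for every `x`. -/
theorem stmt_4 (d : ℕ) (hd : 1 ≤ d) (β c : ℝ)
    (Vstar : (Fin d → ℝ) → ℝ) (hVstar0 : Vstar 0 = 0)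
    (V Vbar : ℝ → (Fin d → ℝ) → ℝ)
    (hcont : ContinuousOn (fun t => Vbar t 0) (Set.Ici 0))
    (hrel : ∀ t ≥ (0 : ℝ), ∀ x : Fin d → ℝ,
      V t x = Vbar t x - Real.exp (-t) * (∫ s in (0 : ℝ)..t, Real.exp s * Vbar s 0)
        + β * (1 - Real.exp (-t)))
    (hconv : ∀ x : Fin d → ℝ, Tendsto (fun t => Vbar t x) atTop (nhds (Vstar x + c))) :
    ∀ x : Fin d → ℝ, Tendsto (fun t => V t x) atTop (nhds (Vstar x + β)) :=
  stmt_4_general d β c Vstar hVstar0 V Vbar hcont hrel hconv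
end

section
/- Let d ≥ 1, let D ⊂ ℝ^d be a bounded set, let a < b be reals, and let Ψ : [0,∞) × ℝ^d → ℝ. Suppose there exists r > 0 such that |Ψ(t,x) − Ψ(t,y)| ≤ (b−a)/4 for all t ≥ 0, all x ∈ D and all y with |y − x| ≤ 2r. Let (t_n)_{n≥1} ⊂ [0,∞) and (x_n)_{n≥1} ⊂ D be sequences such that Ψ(t_{2k−1}, x_{2k−1}) ≤ a and Ψ(t_{2k}, x_{2k}) ≥ b for all k ≥ 1. Then there exist open balls G′ and G″ of radius r in ℝ^d and a strictly increasing sequence k₁ < k₂ < ⋯ of positive integers such that for every j: Ψ(t_{2k_j−1}, x) ≤ (3a+b)/4 for all x ∈ G′, and Ψ(t_{2k_j}, x) ≥ (a+3b)/4 for all x ∈ G″. -/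
/-! Cover the bounded set `D` by finitely many balls of radius `r`. By pigeonhole, some pair of
centres `(p, q)` has `x_{2k-1}` near `p` and `x_{2k}` near `q` for infinitely many `k`. Two points of
one `r`-ball are `2r` apart, so along these `k` the bounds `Ψ ≤ a` and `Ψ ≥ b` at `x_{2k-1}` and
`x_{2k}` spread, with a loss of `(b - a)/4`, to the whole balls around `p` and `q`. -/

open Filter Metric

section Oscillation

variable {X : Type*} [PseudoMetricSpace X] {f : X → ℝ} {x c y : X} {r ε : ℝ}

lemma dist_le_two_mul_of_mem_ball (hx : x ∈ ball c r) (hy : y ∈ ball c r) : dist y x ≤ 2 * r :=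
  (dist_triangle_right y x c).trans (by linarith [mem_ball.mp hx, mem_ball.mp hy])

lemma le_add_of_mem_ball_of_oscillation_le {a : ℝ}
    (hosc : ∀ y, dist y x ≤ 2 * r → |f x - f y| ≤ ε) (hx : x ∈ ball c r) (hfx : f x ≤ a)
    (hy : y ∈ ball c r) : f y ≤ a + ε := by
  linarith [(abs_le.mp (hosc y (dist_le_two_mul_of_mem_ball hx hy))).1]

lemma sub_le_of_mem_ball_of_oscillation_le {b : ℝ}
    (hosc : ∀ y, dist y x ≤ 2 * r → |f x - f y| ≤ ε) (hx : x ∈ ball c r) (hfx : b ≤ f x)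
    (hy : y ∈ ball c r) : b - ε ≤ f y := by
  linarith [(abs_le.mp (hosc y (dist_le_two_mul_of_mem_ball hx hy))).2]

end Oscillation

theorem stmt_6_general (d : ℕ) (D : Set (EuclideanSpace ℝ (Fin d)))
    (hD : Bornology.IsBounded D) (a b : ℝ)
    (Ψ : ℝ → EuclideanSpace ℝ (Fin d) → ℝ) (r : ℝ) (hr : 0 < r)
    (hosc : ∀ t ≥ (0 : ℝ), ∀ x ∈ D, ∀ y : EuclideanSpace ℝ (Fin d),
      ‖y - x‖ ≤ 2 * r → |Ψ t x - Ψ t y| ≤ (b - a) / 4)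
    (ts : ℕ → ℝ) (hts : ∀ n ≥ 1, 0 ≤ ts n)
    (xs : ℕ → EuclideanSpace ℝ (Fin d)) (hxs : ∀ n ≥ 1, xs n ∈ D)
    (hlow : ∀ k ≥ 1, Ψ (ts (2 * k - 1)) (xs (2 * k - 1)) ≤ a)
    (hhigh : ∀ k ≥ 1, b ≤ Ψ (ts (2 * k)) (xs (2 * k))) :
    ∃ y' y'' : EuclideanSpace ℝ (Fin d), ∃ κ : ℕ → ℕ,
      StrictMono κ ∧ (∀ j, 1 ≤ κ j) ∧
      ∀ j, (∀ x ∈ Metric.ball y' r, Ψ (ts (2 * κ j - 1)) x ≤ (3 * a + b) / 4) ∧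
           (∀ x ∈ Metric.ball y'' r, (a + 3 * b) / 4 ≤ Ψ (ts (2 * κ j)) x) := by
  obtain ⟨cs, hcs, hDcs⟩ := totallyBounded_iff.mp
    (hD.isCompact_closure.totallyBounded.subset subset_closure) r hr
  have hcover : ∃ᶠ k in atTop, ∃ p ∈ cs, ∃ q ∈ cs,
      1 ≤ k ∧ xs (2 * k - 1) ∈ ball p r ∧ xs (2 * k) ∈ ball q r := by
    refine (eventually_ge_atTop 1).frequently.mono fun k hk => ?_
    obtain ⟨p, hp, hkp⟩ := Set.mem_iUnion₂.mp (hDcs (hxs (2 * k - 1) (by omega)))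
    obtain ⟨q, hq, hkq⟩ := Set.mem_iUnion₂.mp (hDcs (hxs (2 * k) (by omega)))
    exact ⟨p, hp, q, hq, hk, hkp, hkq⟩
  obtain ⟨p, -, hcover⟩ := hcs.frequently_exists.mp hcover
  obtain ⟨q, -, hcover⟩ := hcs.frequently_exists.mp hcover
  obtain ⟨κ, hκ, hκcover⟩ := extraction_of_frequently_atTop hcover
  refine ⟨p, q, κ, hκ, fun j => (hκcover j).1, fun j => ?_⟩
  obtain ⟨hk, hkp, hkq⟩ := hκcover j
  have hoscD : ∀ n ≥ 1, ∀ y, dist y (xs n) ≤ 2 * r →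
      |Ψ (ts n) (xs n) - Ψ (ts n) y| ≤ (b - a) / 4 := fun n hn y hy =>
    hosc _ (hts n hn) _ (hxs n hn) y (by rwa [← dist_eq_norm])
  refine ⟨fun x hx => ?_, fun x hx => ?_⟩
  · exact (le_add_of_mem_ball_of_oscillation_le (hoscD _ (by omega)) hkp (hlow _ hk) hx).trans_eq
      (by ring)
  · exact (sub_le_of_mem_ball_of_oscillation_le (hoscD _ (by omega)) hkq (hhigh _ hk) hx).trans_eq'
      (by ring)

/-- Equicontinuity-and-pigeonhole lemma from the alternate proof of Theorem 4.5:
if `Ψ` oscillates below `a` and above `b` along sequences `(t_n)`, `(x_n)` with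
`x_n` in a bounded set `D`, and `Ψ(t,·)` has oscillation at most `(b−a)/4` on
`2r`-balls around points of `D` uniformly in `t ≥ 0`, then along a subsequence the
oscillation occurs uniformly on two fixed open balls of radius `r`. -/
theorem stmt_6 (d : ℕ) (hd : 1 ≤ d) (D : Set (EuclideanSpace ℝ (Fin d)))
    (hD : Bornology.IsBounded D) (a b : ℝ) (hab : a < b)
    (Ψ : ℝ → EuclideanSpace ℝ (Fin d) → ℝ) (r : ℝ) (hr : 0 < r)
    (hosc : ∀ t ≥ (0 : ℝ), ∀ x ∈ D, ∀ y : EuclideanSpace ℝ (Fin d),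
      ‖y - x‖ ≤ 2 * r → |Ψ t x - Ψ t y| ≤ (b - a) / 4)
    (ts : ℕ → ℝ) (hts : ∀ n ≥ 1, 0 ≤ ts n)
    (xs : ℕ → EuclideanSpace ℝ (Fin d)) (hxs : ∀ n ≥ 1, xs n ∈ D)
    (hlow : ∀ k ≥ 1, Ψ (ts (2 * k - 1)) (xs (2 * k - 1)) ≤ a)
    (hhigh : ∀ k ≥ 1, b ≤ Ψ (ts (2 * k)) (xs (2 * k))) :
    ∃ y' y'' : EuclideanSpace ℝ (Fin d), ∃ κ : ℕ → ℕ,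
      StrictMono κ ∧ (∀ j, 1 ≤ κ j) ∧
      ∀ j, (∀ x ∈ Metric.ball y' r, Ψ (ts (2 * κ j - 1)) x ≤ (3 * a + b) / 4) ∧
           (∀ x ∈ Metric.ball y'' r, (a + 3 * b) / 4 ≤ Ψ (ts (2 * κ j)) x) :=
  stmt_6_general d D hD a b Ψ r hr hosc ts hts xs hxs hlow hhigh
end

section
/- Let N ≥ 1, 𝕌 a nonempty compact topological space, q_{ij} : 𝕌 → ℝ continuous with q_{ij}(u) ≥ 0 for i ≠ j and Σ_j q_{ij}(u) = 0 for all i, u, r : {1,…,N} × 𝕌 → ℝ continuous, G(h)_i = min_{u∈𝕌} [ r(i,u) + Σ_j q_{ij}(u) h_j ], and β ∈ ℝ. If h, h′ : [0,∞) → ℝ^N are differentiable and both satisfy the value iteration ODE ḣ(t) = G(h(t)) − β·𝟏, then t ↦ max_i |h_i(t) − h′_i(t)| is nonincreasing on [0,∞); in particular sup_{t≥0} max_i |h_i(t) − h′_i(t)| ≤ max_i |h_i(0) − h′_i(0)|. -/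
/-!
The flow of `ḣ = G(h) − β𝟏` is nonexpansive in the sup norm because `G` obeys a discrete
maximum principle: if `v − w` is maximal at the coordinate `j`, then `G(v)_j ≤ G(w)_j`. Indeed,
each row of a rate matrix pairs nonnegative off-diagonal weights with zero total mass, so
`∑ₖ qⱼₖ (vₖ − wₖ) = ∑ₖ qⱼₖ ((vₖ − wₖ) − (vⱼ − wⱼ)) ≤ 0`, and taking the minimum over controls
preserves the inequality. Consequently every coordinate of `±(h − h')` at which `‖h − h'‖∞` is
attained has nonpositive derivative, so the right upper Dini derivative of `‖h − h'‖∞` is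
nonpositive, and a continuous function with this property is nonincreasing.
-/

open Set Filter Topology

section RateMatrix

variable {ι : Type*} [Fintype ι]

lemma sum_mul_nonpos_of_forall_le {q x : ι → ℝ} {j : ι} (hq : ∀ k, j ≠ k → 0 ≤ q k)
    (hsum : ∑ k, q k = 0) (hx : ∀ k, x k ≤ x j) : ∑ k, q k * x k ≤ 0 := by
  have hshift : ∑ k, q k * x k = ∑ k, q k * (x k - x j) := by
    simp only [mul_sub, Finset.sum_sub_distrib, ← Finset.sum_mul, hsum, zero_mul, sub_zero]
  rw [hshift]
  refine Finset.sum_nonpos fun k _ => ?_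
  rcases eq_or_ne j k with rfl | hjk
  · simp
  · exact mul_nonpos_of_nonneg_of_nonpos (hq k hjk) (sub_nonpos.2 (hx k))

lemma iInf_add_sum_mul_le_of_forall_sub_le {𝕌 : Type*} [TopologicalSpace 𝕌] [CompactSpace 𝕌]
    {q : ι → 𝕌 → ℝ} {c : 𝕌 → ℝ} {j : ι} (hqc : ∀ k, Continuous (q k)) (hc : Continuous c)
    (hq : ∀ k, j ≠ k → ∀ u, 0 ≤ q k u) (hsum : ∀ u, ∑ k, q k u = 0) {v w : ι → ℝ}
    (hvw : ∀ k, v k - w k ≤ v j - w j) :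
    ⨅ u, c u + ∑ k, q k u * v k ≤ ⨅ u, c u + ∑ k, q k u * w k := by
  refine ciInf_mono (isCompact_range (by fun_prop)).bddBelow fun u => ?_
  have hnonpos := sum_mul_nonpos_of_forall_le (fun k hjk => hq k hjk u) (hsum u) hvw
  have hsplit : ∑ k, q k u * v k = ∑ k, q k u * w k + ∑ k, q k u * (v k - w k) := by
    rw [← Finset.sum_add_distrib]
    exact Finset.sum_congr rfl fun k _ => by ring
  linarith

end RateMatrix

lemma eventually_le_add_mul_of_hasDerivWithinAt {f : ℝ → ℝ} {f' M τ ε : ℝ}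
    (hf : HasDerivWithinAt f f' (Ioi τ) τ) (hM : f τ ≤ M) (hf' : f τ = M → f' ≤ 0)
    (hε : 0 < ε) : ∀ᶠ z in 𝓝[>] τ, f z ≤ M + ε * (z - τ) := by
  have hright : ∀ᶠ z in 𝓝[>] τ, τ < z := self_mem_nhdsWithin
  rcases hM.lt_or_eq with hlt | heq
  · filter_upwards [hright, hf.continuousWithinAt.tendsto.eventually (eventually_lt_nhds hlt)]
      with z hz hfz
    nlinarith
  · have hslope := (hasDerivWithinAt_iff_tendsto_slope' (lt_irrefl τ)).mp hf
    filter_upwards [hright, hslope.eventually (eventually_lt_nhds ((hf' heq).trans_lt hε))]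
      with z hz hfz
    rw [slope_def_field, div_lt_iff₀ (sub_pos.2 hz)] at hfz
    linarith

lemma antitoneOn_of_eventually_le_add_mul {φ : ℝ → ℝ} {s : Set ℝ} (hs : s.OrdConnected)
    (hφ : ContinuousOn φ s)
    (hloc : ∀ τ ∈ s, ∀ ε > 0, ∀ᶠ z in 𝓝[>] τ, φ z ≤ φ τ + ε * (z - τ)) : AntitoneOn φ s := by
  intro a ha b hb hab
  have hsub : Icc a b ⊆ s := hs.out ha hb
  refine image_le_of_liminf_slope_right_le_deriv_boundary (hφ.mono hsub) (B := fun _ => φ a)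
    (B' := fun _ => 0) le_rfl continuousOn_const (fun _ _ => hasDerivWithinAt_const _ _ _)
    (fun τ hτ r hr => ?_) ⟨hab, le_rfl⟩
  have hright : ∀ᶠ z in 𝓝[>] τ, τ < z := self_mem_nhdsWithin
  refine Eventually.frequently ?_
  filter_upwards [hright, hloc τ (hsub (Ico_subset_Icc_self hτ)) (r / 2) (half_pos hr)]
    with z hz hφz
  rw [slope_def_field, div_lt_iff₀ (sub_pos.2 hz)]
  nlinarith [sub_pos.2 hz]

lemma iSup_abs_eq_norm {ι : Type*} [Fintype ι] (x : ι → ℝ) : ⨆ i, |x i| = ‖x‖ := by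
  rw [← PiLp.norm_toLp x, PiLp.norm_eq_ciSup]
  rfl

section MaximumPrinciple

variable {ι : Type*} [Fintype ι] {F : (ι → ℝ) → ι → ℝ}

lemma eventually_sub_apply_le_norm_add_mul
    (hF : ∀ v w j, (∀ k, v k - w k ≤ v j - w j) → F v j ≤ F w j) {x y : ℝ → ι → ℝ} {τ ε : ℝ}
    (hx : HasDerivWithinAt x (F (x τ)) (Ioi τ) τ) (hy : HasDerivWithinAt y (F (y τ)) (Ioi τ) τ)
    (hε : 0 < ε) (i : ι) : ∀ᶠ z in 𝓝[>] τ, x z i - y z i ≤ ‖x τ - y τ‖ + ε * (z - τ) := by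
  have hcoord (k : ι) : x τ k - y τ k ≤ ‖x τ - y τ‖ :=
    (le_abs_self _).trans (norm_le_pi_norm (x τ - y τ) k)
  refine eventually_le_add_mul_of_hasDerivWithinAt
    ((hasDerivWithinAt_pi.mp hx i).sub (hasDerivWithinAt_pi.mp hy i)) (hcoord i)
    (fun hmax => sub_nonpos.2 (hF _ _ i fun k => hmax ▸ hcoord k)) hε

theorem antitoneOn_norm_sub_of_hasDerivWithinAt
    (hF : ∀ v w j, (∀ k, v k - w k ≤ v j - w j) → F v j ≤ F w j) {x y : ℝ → ι → ℝ} {a : ℝ}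
    (hx : ∀ t ∈ Ici a, HasDerivWithinAt x (F (x t)) (Ici a) t)
    (hy : ∀ t ∈ Ici a, HasDerivWithinAt y (F (y t)) (Ici a) t) :
    AntitoneOn (fun t => ‖x t - y t‖) (Ici a) := by
  refine antitoneOn_of_eventually_le_add_mul ordConnected_Ici
    (fun t ht => ((hx t ht).continuousWithinAt.sub (hy t ht).continuousWithinAt).norm)
    fun τ hτ ε hε => ?_
  have hIoi : Ioi τ ⊆ Ici a := Ioi_subset_Ici_self.trans (Ici_subset_Ici.2 hτ)
  have hx' := (hx τ hτ).mono hIoi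
  have hy' := (hy τ hτ).mono hIoi
  have hcoord (i : ι) : ∀ᶠ z in 𝓝[>] τ, |x z i - y z i| ≤ ‖x τ - y τ‖ + ε * (z - τ) := by
    filter_upwards [eventually_sub_apply_le_norm_add_mul hF hx' hy' hε i,
      eventually_sub_apply_le_norm_add_mul hF hy' hx' hε i] with z hxy hyx
    rw [norm_sub_rev] at hyx
    exact abs_sub_le_iff.2 ⟨hxy, hyx⟩
  have hright : ∀ᶠ z in 𝓝[>] τ, τ < z := self_mem_nhdsWithin
  filter_upwards [eventually_all.2 hcoord, hright] with z hz hτz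
  exact (pi_norm_le_iff_of_nonneg (by positivity)).2 hz

end MaximumPrinciple

theorem stmt_9_general (N : ℕ) (𝕌 : Type*) [TopologicalSpace 𝕌]
    [CompactSpace 𝕌]
    (q : Fin N → Fin N → 𝕌 → ℝ) (hqc : ∀ i j, Continuous (q i j))
    (hqoff : ∀ i j, i ≠ j → ∀ u, 0 ≤ q i j u)
    (hqrow : ∀ i u, ∑ j, q i j u = 0)
    (r : Fin N → 𝕌 → ℝ) (hrc : ∀ i, Continuous (r i))
    (G : (Fin N → ℝ) → Fin N → ℝ)
    (hG : ∀ v i, G v i = sInf (Set.range fun u => r i u + ∑ j, q i j u * v j))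
    (β : ℝ) (h h' : ℝ → Fin N → ℝ)
    (hode : ∀ t ∈ Set.Ici (0 : ℝ),
      HasDerivWithinAt h (fun i => G (h t) i - β) (Set.Ici (0 : ℝ)) t)
    (hode' : ∀ t ∈ Set.Ici (0 : ℝ),
      HasDerivWithinAt h' (fun i => G (h' t) i - β) (Set.Ici (0 : ℝ)) t) :
    AntitoneOn (fun t => ⨆ i, |h t i - h' t i|) (Set.Ici (0 : ℝ)) ∧
    ∀ t ≥ (0 : ℝ), ∀ i, |h t i - h' t i| ≤ ⨆ j, |h 0 j - h' 0 j| := by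
  have hG_max (v w : Fin N → ℝ) (j : Fin N) (hvw : ∀ k, v k - w k ≤ v j - w j) :
      G v j - β ≤ G w j - β := by
    rw [hG, hG]
    exact sub_le_sub_right (iInf_add_sum_mul_le_of_forall_sub_le (hqc j) (hrc j) (hqoff j)
      (hqrow j) hvw) β
  have hanti : AntitoneOn (fun t => ‖h t - h' t‖) (Ici 0) :=
    antitoneOn_norm_sub_of_hasDerivWithinAt (F := fun v i => G v i - β) hG_max hode hode'
  have hsup (t : ℝ) : ⨆ i, |h t i - h' t i| = ‖h t - h' t‖ := iSup_abs_eq_norm (h t - h' t)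
  simp only [hsup]
  refine ⟨hanti, fun t ht i => ?_⟩
  calc |h t i - h' t i| ≤ ‖h t - h' t‖ := norm_le_pi_norm (h t - h' t) i
    _ ≤ ‖h 0 - h' 0‖ := hanti self_mem_Ici ht ht

/-- Sup-norm nonexpansiveness of the value iteration ODE
`ḣ(t) = G(h(t)) − β·𝟏`: for two solutions `h`, `h'` on `[0,∞)`, the function
`t ↦ max_i |h_i(t) − h'_i(t)|` is nonincreasing; in particular it is bounded by its
value at `t = 0`. -/
theorem stmt_9 (N : ℕ) (hN : 1 ≤ N) (𝕌 : Type*) [TopologicalSpace 𝕌]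
    [CompactSpace 𝕌] [Nonempty 𝕌]
    (q : Fin N → Fin N → 𝕌 → ℝ) (hqc : ∀ i j, Continuous (q i j))
    (hqoff : ∀ i j, i ≠ j → ∀ u, 0 ≤ q i j u)
    (hqrow : ∀ i u, ∑ j, q i j u = 0)
    (r : Fin N → 𝕌 → ℝ) (hrc : ∀ i, Continuous (r i))
    (G : (Fin N → ℝ) → Fin N → ℝ)
    (hG : ∀ v i, G v i = sInf (Set.range fun u => r i u + ∑ j, q i j u * v j))
    (β : ℝ) (h h' : ℝ → Fin N → ℝ)
    (hode : ∀ t ∈ Set.Ici (0 : ℝ),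
      HasDerivWithinAt h (fun i => G (h t) i - β) (Set.Ici (0 : ℝ)) t)
    (hode' : ∀ t ∈ Set.Ici (0 : ℝ),
      HasDerivWithinAt h' (fun i => G (h' t) i - β) (Set.Ici (0 : ℝ)) t) :
    AntitoneOn (fun t => ⨆ i, |h t i - h' t i|) (Set.Ici (0 : ℝ)) ∧
    ∀ t ≥ (0 : ℝ), ∀ i, |h t i - h' t i| ≤ ⨆ j, |h 0 j - h' 0 j| :=
  stmt_9_general N 𝕌 q hqc hqoff hqrow r hrc G hG β h h' hode hode'
end

section
/- Let N ≥ 1, 𝕌 a nonempty compact topological space, q_{ij} : 𝕌 → ℝ continuous with q_{ij}(u) ≥ 0 for i ≠ j and Σ_j q_{ij}(u) = 0 for all i, u, r : {1,…,N} × 𝕌 → ℝ continuous, G(h)_i = min_{u∈𝕌} [ r(i,u) + Σ_j q_{ij}(u) h_j ], and β ∈ ℝ. If h, h′ : [0,∞) → ℝ^N are differentiable solutions of ḣ(t) = G(h(t)) − β·𝟏 with h_i(0) ≤ h′_i(0) for every i, then h_i(t) ≤ h′_i(t) for every i and every t ≥ 0. -/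
/-! Kamke comparison. Since the off-diagonal rates are nonnegative, `G` is quasimonotone: raising
`v` while keeping `v k` fixed can only raise `G v k`. Since the rows of `q` sum to zero, `G` is
invariant under adding constants, so `h' + ε (t + 1)` is a strict supersolution. A solution cannot
cross a strict supersolution: at a touching time, in the touching component, the supersolution
moves strictly faster. Letting `ε → 0` gives the claim. -/

open Set Filter Topology

lemma eventually_nhdsGT_nonneg_of_hasDerivWithinAt {f : ℝ → ℝ} {f' t : ℝ}
    (hf : HasDerivWithinAt f f' (Ici t) t) (hft : 0 ≤ f t) (hpos : f t = 0 → 0 < f') :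
    ∀ᶠ s in 𝓝[>] t, 0 ≤ f s := by
  rcases hft.lt_or_eq with hft | hft
  · exact ((hf.continuousWithinAt.mono Ioi_subset_Ici_self).eventually
      (eventually_gt_nhds hft)).mono fun s hs => hs.le
  · have hslope : Tendsto (slope f t) (𝓝[>] t) (𝓝 f') :=
      (hasDerivWithinAt_iff_tendsto_slope' (lt_irrefl t)).mp (hf.mono Ioi_subset_Ici_self)
    filter_upwards [hslope.eventually (eventually_gt_nhds (hpos hft.symm)), self_mem_nhdsWithin]
      with s hs hts
    rw [slope_def_field, ← hft, sub_zero] at hs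
    exact (div_pos_iff_of_pos_right (sub_pos.mpr hts)).mp hs |>.le

theorem pi_le_of_deriv_lt_deriv_at_touch {ι : Type*} [Fintype ι] {x y x' y' : ℝ → ι → ℝ}
    {a : ℝ} (hx : ∀ t ∈ Ici a, HasDerivWithinAt x (x' t) (Ici a) t)
    (hy : ∀ t ∈ Ici a, HasDerivWithinAt y (y' t) (Ici a) t) (ha : x a ≤ y a)
    (htouch : ∀ t ∈ Ici a, ∀ k, x t ≤ y t → x t k = y t k → x' t k < y' t k) :
    ∀ t ∈ Ici a, x t ≤ y t := by
  intro b hb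
  have hcont : ∀ {z z' : ℝ → ι → ℝ}, (∀ t ∈ Ici a, HasDerivWithinAt z (z' t) (Ici a) t) →
      ContinuousOn z (Icc a b) := fun hz t ht =>
    (hz t ht.1).continuousWithinAt.mono Icc_subset_Ici_self
  have hclosed : IsClosed ({t | x t ≤ y t} ∩ Icc a b) := by
    rw [inter_comm]
    exact isClosed_Icc.isClosed_le (hcont hx) (hcont hy)
  refine IsClosed.Icc_subset_of_forall_mem_nhdsWithin hclosed ha ?_ ⟨hb, le_rfl⟩
  rintro t ⟨hxy, hat, -⟩
  have hder : ∀ k, HasDerivWithinAt (fun s => y s k - x s k) (y' t k - x' t k) (Ici t) t :=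
    fun k => ((hasDerivWithinAt_pi.mp (hy t hat) k).sub (hasDerivWithinAt_pi.mp (hx t hat) k)).mono
      (Ici_subset_Ici.mpr hat)
  filter_upwards [eventually_all.mpr fun k => eventually_nhdsGT_nonneg_of_hasDerivWithinAt (hder k)
    (sub_nonneg.mpr (hxy k)) fun heq => sub_pos.mpr (htouch t hat k hxy (sub_eq_zero.mp heq).symm)]
    with s hs k using sub_nonneg.mp (hs k)

section BellmanOperator

variable {ι 𝕌 : Type*} [Fintype ι] (q : ι → ι → 𝕌 → ℝ) (r : ι → 𝕌 → ℝ)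

noncomputable def bellmanOp (v : ι → ℝ) (i : ι) : ℝ :=
  ⨅ u, r i u + ∑ j, q i j u * v j

variable {q r}

lemma bellmanOp_add_const (hqrow : ∀ i u, ∑ j, q i j u = 0) (v : ι → ℝ) (c : ℝ) (i : ι) :
    bellmanOp q r (fun j => v j + c) i = bellmanOp q r v i := by
  refine congrArg iInf (funext fun u => ?_)
  simp only [mul_add, Finset.sum_add_distrib, ← Finset.sum_mul, hqrow, zero_mul, add_zero]

lemma bellmanOp_le_of_le_of_eq [TopologicalSpace 𝕌] [CompactSpace 𝕌]
    (hqc : ∀ i j, Continuous (q i j)) (hrc : ∀ i, Continuous (r i))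
    (hqoff : ∀ i j, i ≠ j → ∀ u, 0 ≤ q i j u) {v w : ι → ℝ} (hvw : v ≤ w) {k : ι}
    (hk : v k = w k) : bellmanOp q r v k ≤ bellmanOp q r w k := by
  refine ciInf_mono (isCompact_range (by fun_prop)).bddBelow fun u => ?_
  gcongr r k u + ?_
  refine Finset.sum_le_sum fun j _ => ?_
  rcases eq_or_ne k j with rfl | hkj
  · exact (congrArg _ hk).le
  · exact mul_le_mul_of_nonneg_left (hvw j) (hqoff k j hkj u)

end BellmanOperator

theorem stmt_10_general (N : ℕ) (𝕌 : Type*) [TopologicalSpace 𝕌]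
    [CompactSpace 𝕌]
    (q : Fin N → Fin N → 𝕌 → ℝ) (hqc : ∀ i j, Continuous (q i j))
    (hqoff : ∀ i j, i ≠ j → ∀ u, 0 ≤ q i j u)
    (hqrow : ∀ i u, ∑ j, q i j u = 0)
    (r : Fin N → 𝕌 → ℝ) (hrc : ∀ i, Continuous (r i))
    (G : (Fin N → ℝ) → Fin N → ℝ)
    (hG : ∀ v i, G v i = sInf (Set.range fun u => r i u + ∑ j, q i j u * v j))
    (β : ℝ) (h h' : ℝ → Fin N → ℝ)
    (hode : ∀ t ∈ Set.Ici (0 : ℝ),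
      HasDerivWithinAt h (fun i => G (h t) i - β) (Set.Ici (0 : ℝ)) t)
    (hode' : ∀ t ∈ Set.Ici (0 : ℝ),
      HasDerivWithinAt h' (fun i => G (h' t) i - β) (Set.Ici (0 : ℝ)) t)
    (h0le : ∀ i, h 0 i ≤ h' 0 i) :
    ∀ t ≥ (0 : ℝ), ∀ i, h t i ≤ h' t i := by
  obtain rfl : G = bellmanOp q r := funext fun v => funext (hG v)
  intro t ht i
  refine le_of_forall_pos_le_add fun δ hδ => ?_
  set ε := δ / (t + 1)
  have hε : 0 < ε := by positivity
  let y : ℝ → Fin N → ℝ := fun s k => h' s k + ε * (s + 1)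
  have hy : ∀ s ∈ Ici 0,
      HasDerivWithinAt y (fun k => bellmanOp q r (h' s) k - β + ε) (Ici 0) s := fun s hs =>
    hasDerivWithinAt_pi.mpr fun k => (hasDerivWithinAt_pi.mp (hode' s hs) k).add
      (by simpa using ((hasDerivWithinAt_id s (Ici 0)).add_const 1).const_mul ε)
  have hy0 : h 0 ≤ y 0 := fun k => by
    simp only [y]
    linarith [h0le k]
  have hcomp := pi_le_of_deriv_lt_deriv_at_touch hode hy hy0 (fun s _ k hle heq => by
    have hG_le := bellmanOp_le_of_le_of_eq hqc hrc hqoff hle heq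
    rw [bellmanOp_add_const hqrow] at hG_le
    linarith) t ht i
  simpa [y, ε, div_mul_cancel₀ δ (by positivity : t + 1 ≠ 0)] using hcomp

/-- Monotonicity of the value iteration flow `ḣ(t) = G(h(t)) − β·𝟏` with respect to
the componentwise order: if `h(0) ≤ h'(0)` componentwise, then `h(t) ≤ h'(t)`
componentwise for all `t ≥ 0`. -/
theorem stmt_10 (N : ℕ) (hN : 1 ≤ N) (𝕌 : Type*) [TopologicalSpace 𝕌]
    [CompactSpace 𝕌] [Nonempty 𝕌]
    (q : Fin N → Fin N → 𝕌 → ℝ) (hqc : ∀ i j, Continuous (q i j))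
    (hqoff : ∀ i j, i ≠ j → ∀ u, 0 ≤ q i j u)
    (hqrow : ∀ i u, ∑ j, q i j u = 0)
    (r : Fin N → 𝕌 → ℝ) (hrc : ∀ i, Continuous (r i))
    (G : (Fin N → ℝ) → Fin N → ℝ)
    (hG : ∀ v i, G v i = sInf (Set.range fun u => r i u + ∑ j, q i j u * v j))
    (β : ℝ) (h h' : ℝ → Fin N → ℝ)
    (hode : ∀ t ∈ Set.Ici (0 : ℝ),
      HasDerivWithinAt h (fun i => G (h t) i - β) (Set.Ici (0 : ℝ)) t)
    (hode' : ∀ t ∈ Set.Ici (0 : ℝ),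
      HasDerivWithinAt h' (fun i => G (h' t) i - β) (Set.Ici (0 : ℝ)) t)
    (h0le : ∀ i, h 0 i ≤ h' 0 i) :
    ∀ t ≥ (0 : ℝ), ∀ i, h t i ≤ h' t i :=
  stmt_10_general N 𝕌 q hqc hqoff hqrow r hrc G hG β h h' hode hode' h0le
end

section
/- Let N ≥ 1, 𝕌 a nonempty compact topological space, q_{ij} : 𝕌 → ℝ continuous with q_{ij}(u) ≥ 0 for i ≠ j and Σ_j q_{ij}(u) = 0 for all i, u, r : {1,…,N} × 𝕌 → ℝ continuous, G(h)_i = min_{u∈𝕌} [ r(i,u) + Σ_j q_{ij}(u) h_j ], and β ∈ ℝ. Assume uniform irreducibility: there exist δ > 0 and a matrix Q̄ = [q̄_{ij}] with q̄_{ij} ≥ 0 for i ≠ j, such that q_{ij}(u) ≥ δ·q̄_{ij} for all i ≠ j and u ∈ 𝕌, and such that for every nonempty proper subset S ⊊ {1,…,N} there exist i ∈ S and j ∉ S with q̄_{ij} > 0. If h, h′ : [0,∞) → ℝ^N are differentiable solutions of ḣ(t) = G(h(t)) − β·𝟏 with h_i(0) ≤ h′_i(0) for every i and h(0) ≠ h′(0),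 then h_i(t) < h′_i(t) for every i and every t > 0. -/
/-! The difference `z = h' - h` satisfies a cooperative differential inequality. Because each
`q(u)` is a rate matrix, `ż_i ≥ 0` whenever `z_i` is the smallest coordinate, and a first-touching
argument keeps `z ≥ 0`. Once `z ≥ 0`, `ż_i ≥ m z_i + δ ∑_{j ≠ i} q̄_{ij} z_j` for a lower bound `m`
of the diagonal rates, so `e^{-mt} z_i(t)` is nondecreasing, and strictly increasing as soon as
some `z_j` with `q̄_{ij} > 0` is positive. By irreducibility the set of positive coordinates thus
grows on every time interval until it is everything, hence it is everything at every `t > 0`. -/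

open Set

theorem pos_of_deriv_pos_on_boundary {ι : Type*} [Finite ι] {f f' : ℝ → ι → ℝ}
    (hf : ∀ t ≥ 0, ∀ i, HasDerivWithinAt (f · i) (f' t i) (Ici 0) t)
    (h0 : ∀ i, 0 < f 0 i) (hbdry : ∀ t > 0, 0 ≤ f t → ∀ i, f t i = 0 → 0 < f' t i) :
    ∀ t ≥ 0, ∀ i, 0 < f t i := by
  by_contra! hbad
  have hcont : ∀ i, ContinuousOn (f · i) (Ici 0) := fun i t ht => (hf t ht i).continuousWithinAt
  set F := ⋃ i, Ici 0 ∩ (f · i) ⁻¹' Iic 0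
  have hFclosed : IsClosed F := isClosed_iUnion_of_finite fun i =>
    (hcont i).preimage_isClosed_of_isClosed isClosed_Ici isClosed_Iic
  have hFbdd : BddBelow F := ⟨0, fun t ht => by
    obtain ⟨_, ht0, -⟩ := mem_iUnion.1 ht
    exact ht0⟩
  obtain ⟨t₀, ht₀, i₀, hi₀⟩ := hbad
  have hTF : sInf F ∈ F := hFclosed.csInf_mem ⟨t₀, mem_iUnion.2 ⟨i₀, ht₀, hi₀⟩⟩ hFbdd
  set T := sInf F
  obtain ⟨i, hT0, hiT⟩ := mem_iUnion.1 hTF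
  have hpos : ∀ s ∈ Ico 0 T, ∀ j, 0 < f s j := fun s hs j => by
    by_contra! hsj
    exact (csInf_le hFbdd (mem_iUnion.2 ⟨j, hs.1, hsj⟩)).not_gt hs.2
  have hT : 0 < T := (mem_Ici.1 hT0).lt_of_ne fun h => (h0 i).not_ge (h ▸ hiT)
  have hnn : 0 ≤ f T := fun j =>
    le_on_closure (fun s hs => (hpos s hs j).le) continuousOn_const
      (by rw [closure_Ico hT.ne]; exact (hcont j).mono Icc_subset_Ici_self)
      (by rw [closure_Ico hT.ne]; exact right_mem_Icc.2 hT.le)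
  have hzero : f T i = 0 := le_antisymm hiT (hnn i)
  -- `T` is a minimum of `f · i` on `[0, T]`, so its derivative there cannot be positive.
  have hmin : IsLocalMinOn (f · i) (Icc 0 T) T := IsMinOn.localize fun s hs => by
    rcases hs.2.lt_or_eq with hsT | rfl
    · exact hzero.trans_le (hpos s ⟨hs.1, hsT⟩ i).le
    · exact le_rfl (a := f T i)
  have := hmin.hasFDerivWithinAt_nonneg ((hf T hT0 i).mono Icc_subset_Ici_self).hasFDerivWithinAt
    (sub_mem_posTangentConeAt_of_segment_subset (y := 0)
      (by rw [segment_symm, segment_eq_Icc hT.le]))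
  rw [ContinuousLinearMap.toSpanSingleton_apply, smul_eq_mul, zero_sub] at this
  nlinarith [hbdry T hT hnn i hzero]

theorem hasDerivWithinAt_exp_neg_mul_mul {y : ℝ → ℝ} {y' m τ : ℝ} {s : Set ℝ}
    (hy : HasDerivWithinAt y y' s τ) :
    HasDerivWithinAt (fun τ => Real.exp (-m * τ) * y τ)
      (Real.exp (-m * τ) * (y' - m * y τ)) s τ := by
  have hexp : HasDerivAt (fun τ => Real.exp (-m * τ)) (Real.exp (-m * τ) * -m) τ := by
    simpa using ((hasDerivAt_id τ).const_mul (-m)).exp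
  exact (hexp.hasDerivWithinAt.mul hy).congr_deriv (by ring)

theorem pos_of_mul_le_deriv {y y' : ℝ → ℝ} {m s t : ℝ}
    (hy : ∀ τ ≥ s, HasDerivWithinAt y (y' τ) (Ici s) τ) (hle : ∀ τ > s, m * y τ ≤ y' τ)
    (hs : 0 < y s) (hst : s ≤ t) : 0 < y t := by
  have hmono : MonotoneOn (fun τ => Real.exp (-m * τ) * y τ) (Ici s) := by
    refine monotoneOn_of_hasDerivWithinAt_nonneg (convex_Ici s)
      (fun τ hτ => (hasDerivWithinAt_exp_neg_mul_mul (hy τ hτ)).continuousWithinAt)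
      (fun τ hτ => (hasDerivWithinAt_exp_neg_mul_mul (hy τ (interior_subset hτ))).mono
        interior_subset) fun τ hτ => ?_
    rw [interior_Ici] at hτ
    exact mul_nonneg (Real.exp_pos _).le (sub_nonneg.2 (hle τ hτ))
  have := hmono self_mem_Ici hst hst
  exact pos_of_mul_pos_right ((mul_pos (Real.exp_pos _) hs).trans_le this) (Real.exp_pos _).le

theorem pos_of_mul_lt_deriv {y y' : ℝ → ℝ} {m s t : ℝ}
    (hy : ∀ τ ≥ s, HasDerivWithinAt y (y' τ) (Ici s) τ) (hlt : ∀ τ > s, m * y τ < y' τ)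
    (hs : 0 ≤ y s) (hst : s < t) : 0 < y t := by
  have hmono : StrictMonoOn (fun τ => Real.exp (-m * τ) * y τ) (Ici s) := by
    refine strictMonoOn_of_hasDerivWithinAt_pos (convex_Ici s)
      (fun τ hτ => (hasDerivWithinAt_exp_neg_mul_mul (hy τ hτ)).continuousWithinAt)
      (fun τ hτ => (hasDerivWithinAt_exp_neg_mul_mul (hy τ (interior_subset hτ))).mono
        interior_subset) fun τ hτ => ?_
    rw [interior_Ici] at hτ
    exact mul_pos (Real.exp_pos _) (sub_pos.2 (hlt τ hτ))
  have := hmono self_mem_Ici hst.le hst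
  exact pos_of_mul_pos_right ((mul_nonneg (Real.exp_pos _).le hs).trans_lt this)
    (Real.exp_pos _).le

theorem Finset.eq_univ_of_ssubset_growth {ι : Type*} [Fintype ι] {P : ℝ → Finset ι}
    (hmono : ∀ s t, 0 ≤ s → s ≤ t → P s ⊆ P t)
    (hgrow : ∀ s t, 0 ≤ s → s < t → (P s).Nonempty → P s ≠ Finset.univ → P s ⊂ P t)
    (h0 : (P 0).Nonempty) {t : ℝ} (ht : 0 < t) : P t = Finset.univ := by
  have key : ∀ k : ℕ, ∀ t > 0, P t = Finset.univ ∨ k + 1 ≤ (P t).card := by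
    intro k
    induction k with
    | zero => exact fun t ht => .inr (h0.mono (hmono 0 t le_rfl ht.le)).card_pos
    | succ k ih =>
      intro t ht
      rcases ih (t / 2) (half_pos ht) with huniv | hcard
      · exact .inl (Finset.univ_subset_iff.1
          (huniv ▸ hmono _ _ (half_pos ht).le (half_le_self ht.le)))
      · by_cases huniv : P t = Finset.univ
        · exact .inl huniv
        · have hne : (P (t / 2)).Nonempty := Finset.card_pos.1 (by omega)
          have hlt := Finset.card_lt_card
            (hgrow _ _ (half_pos ht).le (half_lt_self ht) hne fun h => huniv
              (Finset.univ_subset_iff.1 (h ▸ hmono _ _ (half_pos ht).le (half_le_self ht.le))))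
          exact .inr (by omega)
  exact (key (Fintype.card ι) t ht).resolve_right fun h => by
    have := Finset.card_le_univ (P t); omega

section Cooperative

variable {ι : Type*} [Fintype ι] {z z' : ℝ → ι → ℝ}

theorem nonneg_of_deriv_nonneg_at_min
    (hz : ∀ t ≥ 0, ∀ i, HasDerivWithinAt (z · i) (z' t i) (Ici 0) t) (h0 : 0 ≤ z 0)
    (hmin : ∀ t ≥ 0, ∀ i, (∀ k, z t i ≤ z t k) → 0 ≤ z' t i) : ∀ t ≥ 0, 0 ≤ z t := by
  intro t ht i
  refine le_of_forall_pos_lt_add fun ε hε => ?_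
  -- The barrier `ε * exp (s - t)` lifts `z` strictly above `0` and equals `ε` at time `t`.
  have hexp : ∀ s, HasDerivAt (fun s => ε * Real.exp (s - t)) (ε * Real.exp (s - t)) s :=
    fun s => by simpa using (((hasDerivAt_id s).sub_const t).exp).const_mul ε
  have hpos := pos_of_deriv_pos_on_boundary (f := fun s k => z s k + ε * Real.exp (s - t))
    (fun s hs k => (hz s hs k).add (hexp s).hasDerivWithinAt)
    (fun k => add_pos_of_nonneg_of_pos (h0 k) (by positivity))
    (fun s hs hnn k hk => add_pos_of_nonneg_of_pos
      (hmin s hs.le k fun l => by linarith [show 0 ≤ z s l + ε * Real.exp (s - t) from hnn l])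
      (by positivity)) t ht i
  simpa using hpos

variable [DecidableEq ι] {m : ℝ} {a : ι → ι → ℝ}

theorem pos_of_pos_of_le (hz : ∀ t ≥ 0, ∀ i, HasDerivWithinAt (z · i) (z' t i) (Ici 0) t)
    (ha : ∀ i j, i ≠ j → 0 ≤ a i j) (hnn : ∀ t ≥ 0, 0 ≤ z t)
    (hlow : ∀ t ≥ 0, ∀ i, m * z t i + ∑ j ∈ Finset.univ.erase i, a i j * z t j ≤ z' t i)
    {i : ι} {s t : ℝ} (hs : 0 ≤ s) (hst : s ≤ t) (hzs : 0 < z s i) : 0 < z t i := by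
  refine pos_of_mul_le_deriv (m := m)
    (fun τ hτ => (hz τ (hs.trans hτ) i).mono (Ici_subset_Ici.2 hs)) (fun τ hτ => ?_) hzs hst
  have hτ0 : 0 ≤ τ := hs.trans hτ.le
  refine le_trans ?_ (hlow τ hτ0 i)
  refine le_add_of_nonneg_right (Finset.sum_nonneg fun j hj => ?_)
  exact mul_nonneg (ha i j (Finset.ne_of_mem_erase hj).symm) (hnn τ hτ0 j)

theorem pos_of_pos_of_lt_of_rate_pos
    (hz : ∀ t ≥ 0, ∀ i, HasDerivWithinAt (z · i) (z' t i) (Ici 0) t)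
    (ha : ∀ i j, i ≠ j → 0 ≤ a i j) (hnn : ∀ t ≥ 0, 0 ≤ z t)
    (hlow : ∀ t ≥ 0, ∀ i, m * z t i + ∑ j ∈ Finset.univ.erase i, a i j * z t j ≤ z' t i)
    {i j : ι} (hij : i ≠ j) (haij : 0 < a i j) {s t : ℝ} (hs : 0 ≤ s) (hst : s < t)
    (hzs : 0 < z s j) : 0 < z t i := by
  refine pos_of_mul_lt_deriv (m := m)
    (fun τ hτ => (hz τ (hs.trans hτ) i).mono (Ici_subset_Ici.2 hs)) (fun τ hτ => ?_)
    (hnn s hs i) hst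
  have hτ0 : 0 ≤ τ := hs.trans hτ.le
  have hzj : 0 < a i j * z τ j := mul_pos haij (pos_of_pos_of_le hz ha hnn hlow hs hτ.le hzs)
  refine lt_of_lt_of_le ?_ (hlow τ hτ0 i)
  refine lt_add_of_pos_right _ (hzj.trans_le ?_)
  refine Finset.single_le_sum (f := fun k => a i k * z τ k) (fun k hk => ?_)
    (Finset.mem_erase.2 ⟨hij.symm, Finset.mem_univ j⟩)
  exact mul_nonneg (ha i k (Finset.ne_of_mem_erase hk).symm) (hnn τ hτ0 k)

theorem pos_of_irreducible (hz : ∀ t ≥ 0, ∀ i, HasDerivWithinAt (z · i) (z' t i) (Ici 0) t)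
    (ha : ∀ i j, i ≠ j → 0 ≤ a i j)
    (hirr : ∀ S : Set ι, S.Nonempty → S ≠ univ → ∃ i ∈ S, ∃ j ∉ S, 0 < a i j)
    (hnn : ∀ t ≥ 0, 0 ≤ z t)
    (hlow : ∀ t ≥ 0, ∀ i, m * z t i + ∑ j ∈ Finset.univ.erase i, a i j * z t j ≤ z' t i)
    (h0 : z 0 ≠ 0) {t : ℝ} (ht : 0 < t) (i : ι) : 0 < z t i := by
  set P : ℝ → Finset ι := fun t => {i | 0 < z t i}
  have hmono : ∀ s t, 0 ≤ s → s ≤ t → P s ⊆ P t := fun s t hs hst k hk => by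
    simp only [P, Finset.mem_filter_univ] at hk ⊢
    exact pos_of_pos_of_le hz ha hnn hlow hs hst hk
  have hgrow : ∀ s t, 0 ≤ s → s < t → (P s).Nonempty → P s ≠ Finset.univ → P s ⊂ P t := by
    intro s t hs hst hne hnu
    obtain ⟨k, hk, j, hj, hkj⟩ := hirr (↑(P s))ᶜ
      (Set.nonempty_compl.2 fun h => hnu (Finset.coe_eq_univ.1 h))
      (Set.compl_ne_univ.2 (Finset.coe_nonempty.2 hne))
    simp only [Set.mem_compl_iff, Finset.mem_coe, not_not] at hk hj
    have hkj' : k ≠ j := by rintro rfl; exact hk hj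
    refine (Finset.ssubset_iff_of_subset (hmono s t hs hst.le)).2 ⟨k, ?_, hk⟩
    simp only [P, Finset.mem_filter_univ] at hj ⊢
    exact pos_of_pos_of_lt_of_rate_pos hz ha hnn hlow hkj' hkj hs hst hj
  have h0pos : (P 0).Nonempty := by
    obtain ⟨k, hk⟩ := Function.ne_iff.1 h0
    exact ⟨k, by simpa [P] using (hnn 0 le_rfl k).lt_of_ne' hk⟩
  simpa [P] using Finset.ext_iff.1 (Finset.eq_univ_of_ssubset_growth hmono hgrow h0pos ht) i

end Cooperative

section RateRow

variable {ι : Type*} [Fintype ι] {p z : ι → ℝ} {i : ι}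

theorem sum_mul_nonneg_of_isMin (hoff : ∀ j, j ≠ i → 0 ≤ p j) (hrow : ∑ j, p j = 0)
    (hmin : ∀ k, z i ≤ z k) : 0 ≤ ∑ j, p j * z j := by
  have : ∑ j, p j * z j = ∑ j, p j * (z j - z i) := by
    simp only [mul_sub, Finset.sum_sub_distrib, ← Finset.sum_mul, hrow, zero_mul, sub_zero]
  rw [this]
  refine Finset.sum_nonneg fun j _ => ?_
  rcases eq_or_ne j i with rfl | hji
  · simp
  · exact mul_nonneg (hoff j hji) (sub_nonneg.2 (hmin j))

theorem mul_add_sum_erase_le_sum_mul [DecidableEq ι] {m : ℝ} {a : ι → ℝ} (hm : m ≤ p i)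
    (ha : ∀ j, j ≠ i → a j ≤ p j) (hz : 0 ≤ z) :
    m * z i + ∑ j ∈ Finset.univ.erase i, a j * z j ≤ ∑ j, p j * z j := by
  rw [← Finset.add_sum_erase _ _ (Finset.mem_univ i)]
  exact add_le_add (mul_le_mul_of_nonneg_right hm (hz i)) (Finset.sum_le_sum fun j hj =>
    mul_le_mul_of_nonneg_right (ha j (Finset.ne_of_mem_erase hj)) (hz j))

end RateRow

noncomputable def bellman {ι 𝕌 : Type*} [Fintype ι] (q : ι → ι → 𝕌 → ℝ) (r : ι → 𝕌 → ℝ)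
    (v : ι → ℝ) (i : ι) : ℝ :=
  ⨅ u, r i u + ∑ j, q i j u * v j

theorem bellman_add_le {ι 𝕌 : Type*} [Fintype ι] [TopologicalSpace 𝕌] [CompactSpace 𝕌]
    [Nonempty 𝕌] {q : ι → ι → 𝕌 → ℝ} {r : ι → 𝕌 → ℝ} {i : ι} (hq : ∀ j, Continuous (q i j))
    (hr : Continuous (r i)) {v w : ι → ℝ} {c : ℝ} (hc : ∀ u, c ≤ ∑ j, q i j u * (w j - v j)) :
    bellman q r v i + c ≤ bellman q r w i := by
  refine le_ciInf fun u => ?_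
  have hbdd : BddBelow (range fun u => r i u + ∑ j, q i j u * v j) := (isCompact_range
    (hr.add (continuous_finsetSum _ fun j _ => (hq j).mul continuous_const))).bddBelow
  have hle : bellman q r v i ≤ r i u + ∑ j, q i j u * v j := ciInf_le hbdd u
  have hcu := hc u
  simp only [mul_sub, Finset.sum_sub_distrib] at hcu
  linarith

theorem stmt_11_general (N : ℕ) (𝕌 : Type*) [TopologicalSpace 𝕌]
    [CompactSpace 𝕌] [Nonempty 𝕌]
    (q : Fin N → Fin N → 𝕌 → ℝ) (hqc : ∀ i j, Continuous (q i j))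
    (hqoff : ∀ i j, i ≠ j → ∀ u, 0 ≤ q i j u)
    (hqrow : ∀ i u, ∑ j, q i j u = 0)
    (r : Fin N → 𝕌 → ℝ) (hrc : ∀ i, Continuous (r i))
    (G : (Fin N → ℝ) → Fin N → ℝ)
    (hG : ∀ v i, G v i = sInf (Set.range fun u => r i u + ∑ j, q i j u * v j))
    (δ : ℝ) (hδ : 0 < δ) (qbar : Fin N → Fin N → ℝ)
    (hqbar : ∀ i j, i ≠ j → 0 ≤ qbar i j)
    (hminor : ∀ i j, i ≠ j → ∀ u, δ * qbar i j ≤ q i j u)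
    (hirr : ∀ S : Set (Fin N), S.Nonempty → S ≠ Set.univ →
      ∃ i ∈ S, ∃ j ∉ S, 0 < qbar i j)
    (β : ℝ) (h h' : ℝ → Fin N → ℝ)
    (hode : ∀ t ∈ Set.Ici (0 : ℝ),
      HasDerivWithinAt h (fun i => G (h t) i - β) (Set.Ici (0 : ℝ)) t)
    (hode' : ∀ t ∈ Set.Ici (0 : ℝ),
      HasDerivWithinAt h' (fun i => G (h' t) i - β) (Set.Ici (0 : ℝ)) t)
    (h0le : ∀ i, h 0 i ≤ h' 0 i) (h0ne : h 0 ≠ h' 0) :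
    ∀ t > (0 : ℝ), ∀ i, h t i < h' t i := by
  obtain rfl : G = bellman q r := funext fun v => funext (hG v)
  set z := h' - h
  have hz : ∀ t ≥ 0, ∀ i, HasDerivWithinAt (z · i)
      (bellman q r (h' t) i - bellman q r (h t) i) (Ici 0) t := fun t ht =>
    hasDerivWithinAt_pi.1 (((hode' t ht).sub (hode t ht)).congr_deriv (by ext; simp))
  have hbellman : ∀ t i c, (∀ u, c ≤ ∑ j, q i j u * z t j) →
      c ≤ bellman q r (h' t) i - bellman q r (h t) i := fun t i c hc =>
    le_sub_iff_add_le'.2 (bellman_add_le (hqc i) (hrc i) hc)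
  have hnn : ∀ t ≥ 0, 0 ≤ z t :=
    nonneg_of_deriv_nonneg_at_min hz (fun i => sub_nonneg.2 (h0le i)) fun t _ i hmin =>
      hbellman t i 0 fun u => sum_mul_nonneg_of_isMin (fun j hj => hqoff i j hj.symm u)
        (hqrow i u) hmin
  obtain ⟨m, hm⟩ : ∃ m, ∀ i u, m ≤ q i i u := by
    obtain ⟨m, hm⟩ := (isCompact_range (f := fun p : Fin N × 𝕌 => q p.1 p.1 p.2)
      (continuous_prod_of_discrete_left.2 fun i => hqc i i)).bddBelow
    exact ⟨m, fun i u => hm ⟨(i, u), rfl⟩⟩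
  intro t ht i
  refine sub_pos.1 (pos_of_irreducible (m := m) (a := fun i j => δ * qbar i j) hz
    (fun i j hij => mul_nonneg hδ.le (hqbar i j hij))
    (fun S hS hSu => ?_) hnn (fun t ht i => hbellman t i _ fun u =>
      mul_add_sum_erase_le_sum_mul (hm i u) (fun j hj => hminor i j hj.symm u) (hnn t ht))
    (sub_ne_zero.2 h0ne.symm) ht i)
  obtain ⟨i, hi, j, hj, hij⟩ := hirr S hS hSu
  exact ⟨i, hi, j, hj, mul_pos hδ hij⟩

/-- Strong monotonicity of the value iteration flow `ḣ(t) = G(h(t)) − β·𝟏` under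
uniform irreducibility: if `h(0) ≤ h'(0)` componentwise and `h(0) ≠ h'(0)`, then
`h_i(t) < h'_i(t)` for every `i` and every `t > 0`. -/
theorem stmt_11 (N : ℕ) (hN : 1 ≤ N) (𝕌 : Type*) [TopologicalSpace 𝕌]
    [CompactSpace 𝕌] [Nonempty 𝕌]
    (q : Fin N → Fin N → 𝕌 → ℝ) (hqc : ∀ i j, Continuous (q i j))
    (hqoff : ∀ i j, i ≠ j → ∀ u, 0 ≤ q i j u)
    (hqrow : ∀ i u, ∑ j, q i j u = 0)
    (r : Fin N → 𝕌 → ℝ) (hrc : ∀ i, Continuous (r i))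
    (G : (Fin N → ℝ) → Fin N → ℝ)
    (hG : ∀ v i, G v i = sInf (Set.range fun u => r i u + ∑ j, q i j u * v j))
    (δ : ℝ) (hδ : 0 < δ) (qbar : Fin N → Fin N → ℝ)
    (hqbar : ∀ i j, i ≠ j → 0 ≤ qbar i j)
    (hminor : ∀ i j, i ≠ j → ∀ u, δ * qbar i j ≤ q i j u)
    (hirr : ∀ S : Set (Fin N), S.Nonempty → S ≠ Set.univ →
      ∃ i ∈ S, ∃ j ∉ S, 0 < qbar i j)
    (β : ℝ) (h h' : ℝ → Fin N → ℝ)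
    (hode : ∀ t ∈ Set.Ici (0 : ℝ),
      HasDerivWithinAt h (fun i => G (h t) i - β) (Set.Ici (0 : ℝ)) t)
    (hode' : ∀ t ∈ Set.Ici (0 : ℝ),
      HasDerivWithinAt h' (fun i => G (h' t) i - β) (Set.Ici (0 : ℝ)) t)
    (h0le : ∀ i, h 0 i ≤ h' 0 i) (h0ne : h 0 ≠ h' 0) :
    ∀ t > (0 : ℝ), ∀ i, h t i < h' t i :=
  stmt_11_general N 𝕌 q hqc hqoff hqrow r hrc G hG δ hδ qbar hqbar hminor hirr β h h' hode hode'
    h0le h0ne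
end

section
/- Let N ≥ 1, 𝕌 a nonempty compact topological space, q_{ij} : 𝕌 → ℝ continuous with q_{ij}(u) ≥ 0 for i ≠ j and Σ_j q_{ij}(u) = 0 for all i, u, and r : {1,…,N} × 𝕌 → ℝ continuous. Assume uniform irreducibility: there exist δ > 0 and a matrix Q̄ = [q̄_{ij}] with q̄_{ij} ≥ 0 for i ≠ j, such that q_{ij}(u) ≥ δ·q̄_{ij} for all i ≠ j and u ∈ 𝕌, and for every nonempty proper subset S ⊊ {1,…,N} there exist i ∈ S, j ∉ S with q̄_{ij} > 0. Then there exists a unique pair (V*, β) ∈ ℝ^N × ℝ with V*_N = 0 satisfying min_{u∈𝕌} [ Σ_j q_{ij}(u) V*_j + r(i,u) ] = β for every i ∈ {1,…,N}. Moreover, any pair (V, β′) ∈ ℝ^N × ℝ satisfying min_{u∈𝕌} [ Σ_j q_{ij}(u) V_j + r(i,u) ] = β′ for every i has β′ = β and V = V* + c·𝟏 for some c ∈ ℝ. -/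
/-!
The Bellman operator `T V i = min_u (∑ j, q i j u * V j + r i u)` ignores constants added to `V`,
and `V ↦ T V + M • V` is monotone and `M`-Lipschitz once `-M` bounds the diagonal of `q`. Hence
`(T + M) / (α + M)` is a contraction, so the discounted equation `T V = α • V` is solvable for
every `α > 0`, and `|α V i| ≤ sup |r|` by the maximum principle. Irreducibility gives the strong
maximum principle: two solutions of `T V = β` differ by a constant, and `β` is determined. It also
bounds the oscillation of the discounted solutions uniformly in `α`, so along a subsequence `α → 0`
the pairs `(V - V i₀, α V i₀)` converge to a solution `(V*, β)` of the ergodic equation.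
-/

open Finset Filter Topology NNReal

namespace ControlledChain

variable {ι 𝕌 : Type*}

def IsIrreducible (q : ι → ι → 𝕌 → ℝ) : Prop :=
  ∀ S : Set ι, S.Nonempty → S ≠ Set.univ → ∃ i ∈ S, ∃ j ∉ S, ∀ u, 0 < q i j u

variable [Fintype ι]

structure IsControlledRateMatrix [TopologicalSpace 𝕌] (q : ι → ι → 𝕌 → ℝ) : Prop where
  continuous : ∀ i j, Continuous (q i j)
  nonneg : ∀ i j, i ≠ j → ∀ u, 0 ≤ q i j u
  sum_eq_zero : ∀ i u, ∑ j, q i j u = 0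

noncomputable def bellman (q : ι → ι → 𝕌 → ℝ) (r : ι → 𝕌 → ℝ) (V : ι → ℝ) (i : ι) : ℝ :=
  ⨅ u, ∑ j, q i j u * V j + r i u

section RateRow

variable {a : ι → ℝ} {i : ι}

lemma sum_mul_add_const (ha : ∑ j, a j = 0) (D : ι → ℝ) (c : ℝ) :
    ∑ j, a j * (D j + c) = ∑ j, a j * D j := by
  simp [mul_add, sum_add_distrib, ← sum_mul, ha]

lemma neg_mul_le_sum_mul (ha : ∀ j, j ≠ i → 0 ≤ a j) (hsum : ∑ j, a j = 0) {M b : ℝ}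
    (hM : -M ≤ a i) {D : ι → ℝ} (hD : ∀ j, b ≤ D j) :
    -M * (D i - b) ≤ ∑ j, a j * D j := by
  classical
  rw [← sum_mul_add_const hsum D (-b), ← add_sum_erase _ _ (mem_univ i)]
  have hrest : 0 ≤ ∑ j ∈ univ.erase i, a j * (D j + -b) :=
    sum_nonneg fun j hj => mul_nonneg (ha j (ne_of_mem_erase hj)) (by linarith [hD j])
  have hdiag : -M * (D i - b) ≤ a i * (D i + -b) := by
    rw [← sub_eq_add_neg]; exact mul_le_mul_of_nonneg_right hM (sub_nonneg.2 (hD i))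
  linarith

lemma sum_mul_nonneg (ha : ∀ j, j ≠ i → 0 ≤ a j) (hsum : ∑ j, a j = 0) {D : ι → ℝ}
    (hD : ∀ j, D i ≤ D j) : 0 ≤ ∑ j, a j * D j := by
  simpa using neg_mul_le_sum_mul ha hsum (neg_neg (a i)).le hD

lemma sum_mul_pos (ha : ∀ j, j ≠ i → 0 ≤ a j) (hsum : ∑ j, a j = 0) {D : ι → ℝ}
    (hD : ∀ j, D i ≤ D j) {j : ι} (haj : 0 < a j) (hDj : D i < D j) :
    0 < ∑ k, a k * D k := by
  rw [← sum_mul_add_const hsum D (-D i)]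
  refine sum_pos' (fun k _ => ?_) ⟨j, mem_univ j, mul_pos haj (by linarith)⟩
  rcases eq_or_ne k i with rfl | hk
  · simp
  · exact mul_nonneg (ha k hk) (by linarith [hD k])

end RateRow

variable {q : ι → ι → 𝕌 → ℝ} {r r' : ι → 𝕌 → ℝ}

lemma bellman_sub_const (hrow : ∀ i u, ∑ j, q i j u = 0) (V : ι → ℝ) (c : ℝ) :
    bellman q r (fun j => V j - c) = bellman q r V :=
  funext fun i => iInf_congr fun u => by simp only [sub_eq_add_neg, sum_mul_add_const (hrow i u)]

lemma bellman_zero_smul {c : ℝ} (hc : 0 ≤ c) (V : ι → ℝ) (i : ι) :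
    bellman q 0 (c • V) i = c * bellman q 0 V i := by
  simp only [bellman, Pi.zero_apply, add_zero, Pi.smul_apply, smul_eq_mul,
    Real.mul_iInf_of_nonneg hc, mul_sum]
  exact iInf_congr fun u => sum_congr rfl fun j _ => by ring

lemma bellman_zero_zero (i : ι) : bellman q 0 0 i = 0 := by
  simp [bellman]

variable [TopologicalSpace 𝕌]

lemma continuous_bellman_summand (hq : ∀ i j, Continuous (q i j)) (hr : ∀ i, Continuous (r i))
    (V : ι → ℝ) (i : ι) : Continuous fun u => ∑ j, q i j u * V j + r i u :=
  (continuous_finsetSum _ fun j _ => (hq i j).mul continuous_const).add (hr i)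

variable [CompactSpace 𝕌]

lemma exists_abs_le_of_continuous {f : ι → 𝕌 → ℝ} (hf : ∀ i, Continuous (f i)) :
    ∃ C, ∀ i u, |f i u| ≤ C := by
  obtain ⟨C, hC⟩ := isCompact_univ.exists_bound_of_continuousOn (continuous_pi hf).continuousOn
  exact ⟨C, fun i u => (norm_le_pi_norm (fun i => f i u) i).trans (hC u (Set.mem_univ u))⟩

lemma IsControlledRateMatrix.exists_neg_le_diag (hQ : IsControlledRateMatrix q) :
    ∃ M : ℝ≥0, ∀ i u, -(M : ℝ) ≤ q i i u := by
  obtain ⟨C, hC⟩ := exists_abs_le_of_continuous fun i => hQ.continuous i i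
  exact ⟨C.toNNReal, fun i u => by
    linarith [Real.le_coe_toNNReal C, neg_abs_le (q i i u), hC i u]⟩

lemma bellman_le (hq : ∀ i j, Continuous (q i j)) (hr : ∀ i, Continuous (r i))
    (V : ι → ℝ) (i : ι) (u : 𝕌) : bellman q r V i ≤ ∑ j, q i j u * V j + r i u :=
  ciInf_le (isCompact_range (continuous_bellman_summand hq hr V i)).bddBelow u

variable [Nonempty 𝕌]

lemma exists_bellman_eq (hq : ∀ i j, Continuous (q i j)) (hr : ∀ i, Continuous (r i))
    (V : ι → ℝ) (i : ι) : ∃ u, bellman q r V i = ∑ j, q i j u * V j + r i u := by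
  obtain ⟨u, hu⟩ :=
    (isCompact_range (continuous_bellman_summand hq hr V i)).sInf_mem (Set.range_nonempty _)
  exact ⟨u, hu.symm⟩

lemma exists_le_bellman_sub (hq : ∀ i j, Continuous (q i j)) (hr : ∀ i, Continuous (r i))
    (hr' : ∀ i, Continuous (r' i)) (V W : ι → ℝ) (i : ι) :
    ∃ u, ∑ j, q i j u * (V j - W j) + (r i u - r' i u) ≤ bellman q r V i - bellman q r' W i := by
  obtain ⟨u, hu⟩ := exists_bellman_eq hq hr V i
  refine ⟨u, ?_⟩
  have := bellman_le hq hr' W i u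
  simp only [hu, mul_sub, sum_sub_distrib]
  linarith

lemma abs_bellman_sub_bellman_zero_le (hq : ∀ i j, Continuous (q i j))
    (hr : ∀ i, Continuous (r i)) {R : ℝ} (hR : ∀ i u, |r i u| ≤ R) (V : ι → ℝ) (i : ι) :
    |bellman q r V i - bellman q 0 V i| ≤ R := by
  have h0 : ∀ i, Continuous ((0 : ι → 𝕌 → ℝ) i) := fun _ => continuous_const
  obtain ⟨u, hu⟩ := exists_le_bellman_sub hq hr h0 V V i
  obtain ⟨u', hu'⟩ := exists_le_bellman_sub hq h0 hr V V i
  simp only [sub_self, mul_zero, sum_const_zero, Pi.zero_apply, zero_add] at hu hu'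
  rw [abs_le]
  constructor <;> linarith [abs_le.1 (hR i u), abs_le.1 (hR i u')]

lemma bellman_sub_bellman_le (hQ : IsControlledRateMatrix q) (hr : ∀ i, Continuous (r i))
    {M : ℝ} (hM : ∀ i u, -M ≤ q i i u) (V W : ι → ℝ) (i : ι) :
    bellman q r W i - bellman q r V i ≤ M * (V i - W i + dist V W) := by
  obtain ⟨u, hu⟩ := exists_le_bellman_sub hQ.continuous hr hr V W i
  have hD : ∀ j, -dist V W ≤ V j - W j := fun j => by
    have := dist_le_pi_dist V W j
    rw [Real.dist_eq] at this
    linarith [neg_abs_le (V j - W j)]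
  have := neg_mul_le_sum_mul (fun j hj => hQ.nonneg i j hj.symm u) (hQ.sum_eq_zero i u)
    (hM i u) hD
  linarith

lemma lipschitzWith_bellman (hQ : IsControlledRateMatrix q) (hr : ∀ i, Continuous (r i))
    {M : ℝ≥0} (hM : ∀ i u, -(M : ℝ) ≤ q i i u) : LipschitzWith (2 * M) (bellman q r) := by
  refine LipschitzWith.of_dist_le_mul fun V W => (dist_pi_le_iff (by positivity)).2 fun i => ?_
  have h₁ := bellman_sub_bellman_le hQ hr hM V W i
  have h₂ := bellman_sub_bellman_le hQ hr hM W V i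
  have hVW := dist_le_pi_dist V W i
  rw [Real.dist_eq] at hVW ⊢
  rw [dist_comm] at h₂
  push_cast
  rw [abs_le] at hVW ⊢
  constructor <;> nlinarith [M.2]

lemma continuous_bellman (hQ : IsControlledRateMatrix q) (hr : ∀ i, Continuous (r i)) :
    Continuous (bellman q r) :=
  have ⟨_, hM⟩ := hQ.exists_neg_le_diag
  (lipschitzWith_bellman hQ hr hM).continuous

lemma exists_bellman_eq_mul (hQ : IsControlledRateMatrix q) (hr : ∀ i, Continuous (r i))
    {α : ℝ≥0} (hα : 0 < α) : ∃ V : ι → ℝ, ∀ i, bellman q r V i = α * V i := by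
  obtain ⟨M, hM⟩ := hQ.exists_neg_le_diag
  have hαM : (0 : ℝ) < α + M := by positivity
  let F : (ι → ℝ) → ι → ℝ := fun V i => (α + M : ℝ)⁻¹ * (bellman q r V i + M * V i)
  have hF : ContractingWith (M / (α + M)) F := by
    refine ⟨(div_lt_one (by positivity)).2 (lt_add_of_pos_left _ hα), ?_⟩
    refine LipschitzWith.of_dist_le_mul fun V W => (dist_pi_le_iff (by positivity)).2 fun i => ?_
    have h₁ := bellman_sub_bellman_le hQ hr hM V W i
    have h₂ := bellman_sub_bellman_le hQ hr hM W V i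
    rw [dist_comm] at h₂
    rw [Real.dist_eq, ← mul_sub, abs_mul, abs_of_pos (inv_pos.2 hαM), NNReal.coe_div,
      NNReal.coe_add, div_eq_inv_mul, mul_assoc]
    gcongr
    rw [abs_le]
    constructor <;> linarith
  refine ⟨ContractingWith.fixedPoint F hF, fun i => ?_⟩
  have hfix := congrFun (hF.fixedPoint_isFixedPt) i
  rw [inv_mul_eq_iff_eq_mul₀ hαM.ne'] at hfix
  linarith

lemma abs_mul_le_of_bellman_eq_mul (hQ : IsControlledRateMatrix q)
    (hr : ∀ i, Continuous (r i)) {R : ℝ} (hR : ∀ i u, |r i u| ≤ R) {α : ℝ} (hα : 0 ≤ α)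
    {V : ι → ℝ} (hV : ∀ i, bellman q r V i = α * V i) (i : ι) : |α * V i| ≤ R := by
  obtain ⟨imax, -, himax⟩ := exists_max_image univ V ⟨i, mem_univ i⟩
  obtain ⟨imin, -, himin⟩ := exists_min_image univ V ⟨i, mem_univ i⟩
  obtain ⟨u, hu⟩ := exists_bellman_eq hQ.continuous hr V imin
  obtain ⟨u'⟩ := ‹Nonempty 𝕌›
  have hsum_max : ∑ j, q imax j u' * V j ≤ 0 := by
    have := sum_mul_nonneg (fun j hj => hQ.nonneg imax j hj.symm u') (hQ.sum_eq_zero imax u')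
      (D := -V) fun j => neg_le_neg (himax j (mem_univ j))
    simpa using this
  have hsum_min := sum_mul_nonneg (fun j hj => hQ.nonneg imin j hj.symm u) (hQ.sum_eq_zero imin u)
    fun j => himin j (mem_univ j)
  have hup := bellman_le hQ.continuous hr V imax u'
  rw [hV] at hup hu
  rw [abs_le]
  constructor
  · nlinarith [himin i (mem_univ i), abs_le.1 (hR imin u)]
  · nlinarith [himax i (mem_univ i), abs_le.1 (hR imax u')]

lemma abs_bellman_zero_le_of_bellman_eq_mul (hQ : IsControlledRateMatrix q)
    (hr : ∀ i, Continuous (r i)) {R : ℝ} (hR : ∀ i u, |r i u| ≤ R) {α : ℝ} (hα : 0 ≤ α)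
    {V : ι → ℝ} (hV : ∀ i, bellman q r V i = α * V i) (i : ι) : |bellman q 0 V i| ≤ 2 * R := by
  have h₁ := abs_bellman_sub_bellman_zero_le hQ.continuous hr hR V i
  have h₂ := abs_mul_le_of_bellman_eq_mul hQ hr hR hα hV i
  rw [hV] at h₁
  rw [abs_le] at h₁ h₂ ⊢
  constructor <;> linarith

lemma le_of_bellman_eq [Nonempty ι] (hQ : IsControlledRateMatrix q)
    (hr : ∀ i, Continuous (r i)) {V W : ι → ℝ} {β β' : ℝ} (hV : ∀ i, bellman q r V i = β)
    (hW : ∀ i, bellman q r W i = β') : β' ≤ β := by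
  obtain ⟨i, -, hi⟩ := exists_min_image univ (fun j => V j - W j) univ_nonempty
  obtain ⟨u, hu⟩ := exists_le_bellman_sub hQ.continuous hr hr V W i
  have := sum_mul_nonneg (fun j hj => hQ.nonneg i j hj.symm u) (hQ.sum_eq_zero i u)
    (D := fun j => V j - W j) fun j => hi j (mem_univ j)
  rw [hV, hW] at hu
  linarith

/-- Strong maximum principle: by irreducibility the set where `V - W` is minimal is all of `ι`. -/
lemma exists_eq_add_const_of_bellman_eq [Nonempty ι] (hQ : IsControlledRateMatrix q)
    (hr : ∀ i, Continuous (r i)) (hirr : IsIrreducible q) {V W : ι → ℝ} {β : ℝ}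
    (hV : ∀ i, bellman q r V i = β) (hW : ∀ i, bellman q r W i = β) :
    ∃ c, V = fun i => W i + c := by
  obtain ⟨i₀, -, hi₀⟩ := exists_min_image univ (fun j => V j - W j) univ_nonempty
  set S := {i | V i - W i = V i₀ - W i₀}
  suffices hS : S = Set.univ by
    refine ⟨V i₀ - W i₀, funext fun i => ?_⟩
    have hi : i ∈ S := hS ▸ Set.mem_univ i
    simp only [S, Set.mem_ofPred_eq] at hi
    linarith
  by_contra hS
  obtain ⟨i, hi, j, hj, hqij⟩ := hirr S ⟨i₀, rfl⟩ hS
  have hmin : ∀ k, V i - W i ≤ V k - W k := fun k => hi.trans_le (hi₀ k (mem_univ k))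
  have hlt : V i - W i < V j - W j := (hmin j).lt_of_ne fun h => hj (h.symm.trans hi)
  obtain ⟨u, hu⟩ := exists_le_bellman_sub hQ.continuous hr hr V W i
  have := sum_mul_pos (fun k hk => hQ.nonneg i k hk.symm u) (hQ.sum_eq_zero i u)
    (D := fun k => V k - W k) hmin (hqij u) hlt
  rw [hV, hW] at hu
  linarith

/-- Were the normalized discounted solutions unbounded, a limit of them rescaled to norm one would
solve the homogeneous equation with `β = 0`, hence be constant, hence vanish. -/
lemma exists_norm_sub_le_of_bellman_eq_mul (hQ : IsControlledRateMatrix q)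
    (hr : ∀ i, Continuous (r i)) (hirr : IsIrreducible q) (i₀ : ι) :
    ∃ C, ∀ α : ℝ, 0 ≤ α → ∀ V : ι → ℝ, (∀ i, bellman q r V i = α * V i) →
      ‖fun i => V i - V i₀‖ ≤ C := by
  have : Nonempty ι := ⟨i₀⟩
  obtain ⟨R, hR⟩ := exists_abs_le_of_continuous hr
  by_contra! h
  choose α hα V hV hlarge using fun n : ℕ => h n
  set s : ℕ → ℝ := fun n => ‖fun i => V n i - V n i₀‖
  set W : ℕ → ι → ℝ := fun n => (s n)⁻¹ • fun i => V n i - V n i₀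
  have hs : Tendsto s atTop atTop :=
    tendsto_atTop_mono (fun n => (hlarge n).le) tendsto_natCast_atTop_atTop
  have hW : ∀ n, ‖W n‖ = 1 := fun n =>
    norm_smul_inv_norm (norm_pos_iff.1 ((Nat.cast_nonneg n).trans_lt (hlarge n)))
  have hbellW : ∀ n i, |bellman q 0 (W n) i| ≤ 2 * R * (s n)⁻¹ := fun n i => by
    rw [bellman_zero_smul (inv_nonneg.2 (norm_nonneg _)), bellman_sub_const hQ.sum_eq_zero,
      abs_mul, abs_of_nonneg (inv_nonneg.2 (norm_nonneg _)), mul_comm]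
    gcongr
    exact abs_bellman_zero_le_of_bellman_eq_mul hQ hr hR (hα n) (hV n) i
  obtain ⟨W₀, -, φ, hφ, hlim⟩ :=
    tendsto_subseq_of_bounded (Metric.isBounded_closedBall (x := 0) (r := 1))
      fun n => mem_closedBall_zero_iff.2 (hW n).le
  have hW₀ : ‖W₀‖ = 1 := tendsto_nhds_unique hlim.norm (by simp [hW])
  have hW₀i₀ : W₀ i₀ = 0 :=
    tendsto_nhds_unique ((continuous_apply i₀).continuousAt.tendsto.comp hlim)
      (by simp [W, Function.comp_def])
  have hsolW₀ : ∀ i, bellman q 0 W₀ i = 0 := fun i => by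
    have hcont :=
      (continuous_apply i).comp (continuous_bellman (r := 0) hQ fun _ => continuous_const)
    refine tendsto_nhds_unique (hcont.continuousAt.tendsto.comp hlim) ?_
    refine squeeze_zero_norm (fun n => hbellW (φ n) i) ?_
    simpa using ((hs.comp hφ.tendsto_atTop).inv_tendsto_atTop).const_mul (2 * R)
  obtain ⟨c, hc⟩ := exists_eq_add_const_of_bellman_eq hQ (fun _ => continuous_const) hirr hsolW₀
    (bellman_zero_zero (q := q))
  have hc0 : c = 0 := by simpa [hW₀i₀] using (congrFun hc i₀).symm
  simp [hc, hc0] at hW₀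

theorem exists_bellman_eq_const (hQ : IsControlledRateMatrix q) (hr : ∀ i, Continuous (r i))
    (hirr : IsIrreducible q) (i₀ : ι) :
    ∃ V : ι → ℝ, ∃ β, V i₀ = 0 ∧ ∀ i, bellman q r V i = β := by
  obtain ⟨R, hR⟩ := exists_abs_le_of_continuous hr
  obtain ⟨C, hC⟩ := exists_norm_sub_le_of_bellman_eq_mul hQ hr hirr i₀
  let α : ℕ → ℝ≥0 := fun n => (n + 1 : ℝ≥0)⁻¹
  choose V hV using fun n => exists_bellman_eq_mul hQ hr (α := α n) (by positivity)
  set W : ℕ → ι → ℝ := fun n i => V n i - V n i₀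
  set b : ℕ → ℝ := fun n => α n * V n i₀
  have hW : ∀ n i, bellman q r (W n) i = α n * W n i + b n := fun n i => by
    simp only [W, b, bellman_sub_const hQ.sum_eq_zero, hV n]
    ring
  obtain ⟨⟨W₀, β⟩, -, φ, hφ, hlim⟩ :=
    tendsto_subseq_of_bounded (x := fun n => (W n, b n))
      (Metric.isBounded_closedBall.prod (Metric.isBounded_closedBall (x := 0) (r := R)))
      fun n => Set.mk_mem_prod (mem_closedBall_zero_iff.2 (hC _ (α n).2 _ (hV n)))
        (mem_closedBall_zero_iff.2 (abs_mul_le_of_bellman_eq_mul hQ hr hR (α n).2 (hV n) i₀))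
  have hWlim : Tendsto (W ∘ φ) atTop (𝓝 W₀) := (continuous_fst.tendsto _).comp hlim
  have hblim : Tendsto (b ∘ φ) atTop (𝓝 β) := (continuous_snd.tendsto _).comp hlim
  have hαlim : Tendsto (fun n => (α (φ n) : ℝ)) atTop (𝓝 0) := by
    simpa [α, Function.comp_def] using
      (tendsto_one_div_add_atTop_nhds_zero_nat (𝕜 := ℝ)).comp hφ.tendsto_atTop
  refine ⟨W₀, β, tendsto_nhds_unique ((continuous_apply i₀).continuousAt.tendsto.comp hWlim)
    (by simp [W, Function.comp_def]), fun i => tendsto_nhds_unique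
    (((continuous_apply i).comp (continuous_bellman hQ hr)).continuousAt.tendsto.comp hWlim) ?_⟩
  have := (hαlim.mul ((continuous_apply i).continuousAt.tendsto.comp hWlim)).add hblim
  simpa [Function.comp_def, hW] using this

end ControlledChain

open ControlledChain in
/-- Characterization of the solution of the ergodic HJB equation
`min_{u∈𝕌} [ Σ_j q_{ij}(u) V_j + r(i,u) ] = β` for a uniformly irreducible
continuous-time controlled Markov chain: there is a unique pair `(V*, β)` with
`V*_N = 0`, and any solution pair `(V, β′)` has `β′ = β` and `V = V* + c·𝟏`. -/
theorem stmt_12 (N : ℕ) (hN : 1 ≤ N) (𝕌 : Type*) [TopologicalSpace 𝕌]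
    [CompactSpace 𝕌] [Nonempty 𝕌]
    (q : Fin N → Fin N → 𝕌 → ℝ) (hqc : ∀ i j, Continuous (q i j))
    (hqoff : ∀ i j, i ≠ j → ∀ u, 0 ≤ q i j u)
    (hqrow : ∀ i u, ∑ j, q i j u = 0)
    (r : Fin N → 𝕌 → ℝ) (hrc : ∀ i, Continuous (r i))
    (δ : ℝ) (hδ : 0 < δ) (qbar : Fin N → Fin N → ℝ)
    (hminor : ∀ i j, i ≠ j → ∀ u, δ * qbar i j ≤ q i j u)
    (hirr : ∀ S : Set (Fin N), S.Nonempty → S ≠ Set.univ →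
      ∃ i ∈ S, ∃ j ∉ S, 0 < qbar i j) :
    ∃ Vstar : Fin N → ℝ, ∃ β : ℝ,
      Vstar ⟨N - 1, by omega⟩ = 0 ∧
      (∀ i, sInf (Set.range fun u => ∑ j, q i j u * Vstar j + r i u) = β) ∧
      ∀ (V : Fin N → ℝ) (β' : ℝ),
        (∀ i, sInf (Set.range fun u => ∑ j, q i j u * V j + r i u) = β') →
        β' = β ∧ ∃ c : ℝ, V = fun i => Vstar i + c := by
  have hQ : IsControlledRateMatrix q := ⟨hqc, hqoff, hqrow⟩
  have hQirr : IsIrreducible q := fun S hS hSU => by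
    obtain ⟨i, hi, j, hj, hij⟩ := hirr S hS hSU
    exact ⟨i, hi, j, hj, fun u =>
      (mul_pos hδ hij).trans_le (hminor i j (ne_of_mem_of_not_mem hi hj) u)⟩
  have : Nonempty (Fin N) := ⟨⟨0, hN⟩⟩
  obtain ⟨Vstar, β, hVstar₀, hVstar⟩ := exists_bellman_eq_const hQ hrc hQirr ⟨N - 1, by omega⟩
  refine ⟨Vstar, β, hVstar₀, hVstar, fun V β' hV => ?_⟩
  have hβ : β' = β :=
    le_antisymm (le_of_bellman_eq hQ hrc hVstar hV) (le_of_bellman_eq hQ hrc hV hVstar)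
  exact ⟨hβ, exists_eq_add_const_of_bellman_eq hQ hrc hQirr hV (hβ ▸ hVstar)⟩
end
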